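/- Under the hypotheses of the previous statement (all fibers have zero topological entropy), the topological entropies of f and g coincide: h_top(f) = h_top(g). -/

import Mathlib

/-!
Since `π` is a uniformly continuous factor map, `h(g) ≤ h(f)`. The converse is Bowen's inequality
`h(f) ≤ h(g) + c` when every fibre has entropy at most `c`. Fix an entourage `U` and `ε > 0`.
Each fibre `π⁻¹ y` is covered by at most `exp((c + ε) n_y)` dynamical `(U, n_y)`-balls; as `π`
is a closed map, these balls also cover `π⁻¹` of a neighbourhood of `y`, and a Lebesgue number
`O` of a finite subcover makes this uniform, with all `n_y ≤ M`. Following the `g`-orbit of a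
point of a dynamical `(O, ℓ)`-ball in blocks of length at most `M` and concatenating the block
covers, the preimage of that ball is shadowed by at most `exp((c + ε)(ℓ + M))` itineraries,
whence `N_f(U ○ U, ℓ) ≤ N_g(O, ℓ) · exp((c + ε)(ℓ + M))`.
-/

open Set Filter Function Dynamics UniformSpace
open scoped Uniformity ENNReal SetRel Topology

lemma EReal.le_of_forall_pos_le_add {a b : EReal} (h : ∀ ε : ℝ, 0 < ε → a ≤ b + ε) :
    a ≤ b := by
  induction b using EReal.rec with
  | bot => simpa using h 1 one_pos
  | coe b =>
    refine EReal.le_of_forall_lt_iff_le.1 fun z hz => ?_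
    have hbz : 0 < z - b := _root_.sub_pos.2 (EReal.coe_lt_coe_iff.1 hz)
    have := h (z - b) hbz
    rwa [← EReal.coe_add, add_sub_cancel] at this
  | top => exact le_top

lemma limsup_log_div_le_add_of_le_mul_exp {a b : ℕ → ℝ≥0∞} {v : ℕ → ℝ} {r : ℝ}
    (hab : ∀ᶠ n in atTop, a n ≤ b n * EReal.exp (v n))
    (hv : Tendsto (fun n => v n / n) atTop (𝓝 r)) :
    limsup (fun n => ENNReal.log (a n) / n) atTop ≤
      limsup (fun n => ENNReal.log (b n) / n) atTop + r := by
  have hv' : Tendsto (fun n : ℕ => (v n : EReal) / n) atTop (𝓝 (r : EReal)) := by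
    simpa only [← EReal.coe_coe_eq_natCast, ← EReal.coe_div] using EReal.tendsto_coe.2 hv
  have hle : ∀ᶠ n : ℕ in atTop,
      ENNReal.log (a n) / n ≤ ENNReal.log (b n) / n + (v n : EReal) / n := by
    filter_upwards [hab] with n hn
    rw [← EReal.add_div_of_nonneg_right (by positivity), ← EReal.log_exp (v n),
      ← ENNReal.log_mul_add]
    exact EReal.monotone_div_right_of_nonneg (by positivity) (ENNReal.log_monotone hn)
  calc limsup (fun n => ENNReal.log (a n) / n) atTop
      ≤ limsup (fun n => ENNReal.log (b n) / n + (v n : EReal) / n) atTop :=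
        limsup_le_limsup hle
    _ ≤ limsup (fun n => ENNReal.log (b n) / n) atTop + r := by
        rw [← hv'.limsup_eq]
        exact EReal.limsup_add_le (by simp [hv'.limsup_eq]) (by simp [hv'.limsup_eq])

namespace Dynamics

variable {X Y : Type*}

lemma exists_isDynCoverOf_card_le_exp {f : X → X} {F : Set X}
    {U : SetRel X X} {r : ℝ} (h : coverEntropyEntourage f F U < r) :
    ∃ n, 1 ≤ n ∧ ∃ s : Finset X, IsDynCoverOf f F U n s ∧
      (s.card : ℝ≥0∞) ≤ EReal.exp (r * n : ℝ) := by
  obtain ⟨n, hn, hn1⟩ :=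
    ((eventually_lt_of_limsup_lt h).and (eventually_ge_atTop 1)).exists
  have hlog : ENNReal.log (coverMincard f F U n) ≤ (r * n : ℝ) := by
    have hn0 : (0 : EReal) < n := by exact_mod_cast hn1
    rw [EReal.coe_mul, EReal.coe_coe_eq_natCast, mul_comm,
      ← EReal.div_le_iff_le_mul hn0 (EReal.natCast_ne_top n)]
    exact hn.le
  have hcard : (coverMincard f F U n : ℝ≥0∞) ≤ EReal.exp (r * n : ℝ) := by
    simpa using EReal.exp_monotone hlog
  obtain ⟨s, hs, hs_card⟩ := (coverMincard_finite_iff f F U n).1 <|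
    ENat.toENNReal_lt_top.1 <| hcard.trans_lt (by rw [EReal.exp_coe]; exact ENNReal.ofReal_lt_top)
  refine ⟨n, hn1, s, hs, ?_⟩
  rwa [← ENat.toENNReal_coe, hs_card]

/-- An itinerary `φ` need not be an orbit: this is what allows gluing the covers of consecutive
time blocks. -/
def shadowSet (f : X → X) (U : SetRel X X) (n : ℕ) (φ : ℕ → X) : Set X :=
  {x | ∀ j < n, (f^[j] x, φ j) ∈ U}

section shadowSet

variable {f : X → X} {U : SetRel X X} {m n : ℕ} {φ : ℕ → X}

lemma shadowSet_antitone : Antitone fun n => shadowSet f U n φ :=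
  fun _ _ h _ hx j hj => hx j (hj.trans_le h)

lemma mem_shadowSet_iterate_iff {x c : X} :
    x ∈ shadowSet f U n (fun j => f^[j] c) ↔ (x, c) ∈ dynEntourage f U n :=
  mem_dynEntourage.symm

lemma mem_shadowSet_append {c x : X} {ψ : ℕ → X} (hc : (x, c) ∈ dynEntourage f U m)
    (hψ : f^[m] x ∈ shadowSet f U n ψ) :
    x ∈ shadowSet f U (m + n) (fun j => if j < m then f^[j] c else ψ (j - m)) := by
  intro j hj
  by_cases hjm : j < m
  · simpa only [if_pos hjm] using mem_dynEntourage.1 hc j hjm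
  · have := hψ (j - m) (by omega)
    rw [← iterate_add_apply, Nat.sub_add_cancel (not_lt.1 hjm)] at this
    simpa only [if_neg hjm] using this

lemma mem_dynEntourage_comp_of_mem_shadowSet [U.IsSymm] {x y : X}
    (hx : x ∈ shadowSet f U n φ) (hy : y ∈ shadowSet f U n φ) :
    (x, y) ∈ dynEntourage f (U ○ U) n :=
  mem_dynEntourage.2 fun j hj => SetRel.prodMk_mem_comp (hx j hj) (SetRel.symm U (hy j hj))

lemma exists_isDynCoverOf_card_le_of_subset_shadowSet [U.IsSymm] {F : Set X}
    {t : Finset (ℕ → X)} (h : F ⊆ ⋃ φ ∈ t, shadowSet f U n φ) :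
    ∃ s : Finset X, IsDynCoverOf f F (U ○ U) n s ∧ s.card ≤ t.card := by
  classical
  let pick : (ℕ → X) → X := fun φ =>
    if hφ : (shadowSet f U n φ).Nonempty then hφ.some else φ 0
  refine ⟨t.image pick, fun x hx => ?_, Finset.card_image_le⟩
  obtain ⟨φ, hφ, hxφ⟩ := mem_iUnion₂.1 (h hx)
  have hpick : pick φ ∈ shadowSet f U n φ := by
    simp only [pick]
    rw [dif_pos ⟨x, hxφ⟩]
    exact Nonempty.some_mem _
  exact ⟨pick φ, Finset.mem_image_of_mem _ hφ,
    mem_dynEntourage_comp_of_mem_shadowSet hxφ hpick⟩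

end shadowSet

lemma iterate_mem_ball_dynEntourage {g : Y → Y} {O : SetRel Y Y} {y z : Y} {m n : ℕ}
    (h : y ∈ ball z (dynEntourage g O (m + n))) :
    g^[m] y ∈ ball (g^[m] z) (dynEntourage g O n) :=
  mem_ball_dynEntourage.2 fun j hj => by
    simpa only [← iterate_add_apply] using mem_ball_dynEntourage.1 h (j + m) (by omega)

lemma exists_shadowSet_cover_preimage_ball_dynEntourage {f : X → X} {g : Y → Y} {π : X → Y}
    (hsemi : Semiconj π f g) {U : SetRel X X} {O : SetRel Y Y} {r : ℝ} (hr : 0 ≤ r) {M : ℕ}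
    (hloc : ∀ z, ∃ m, 1 ≤ m ∧ m ≤ M ∧ ∃ s : Finset X,
      IsDynCoverOf f (π ⁻¹' ball z O) U m s ∧
        (s.card : ℝ≥0∞) ≤ EReal.exp (r * m : ℝ))
    {ℓ : ℕ} (hℓ : 0 < ℓ) (z : Y) :
    ∃ t : Finset (ℕ → X), (t.card : ℝ≥0∞) ≤ EReal.exp (r * (ℓ + M) : ℝ) ∧
      π ⁻¹' ball z (dynEntourage g O ℓ) ⊆ ⋃ φ ∈ t, shadowSet f U ℓ φ := by
  classical
  induction ℓ using Nat.strong_induction_on generalizing z with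
  | _ ℓ ih =>
  obtain ⟨m, hm1, hmM, s, hs, hs_card⟩ := hloc z
  have hzO : π ⁻¹' ball z (dynEntourage g O ℓ) ⊆ π ⁻¹' ball z O := by
    refine preimage_mono (ball_mono ?_ z)
    simpa using dynEntourage_antitone g O hℓ
  rcases le_or_gt ℓ m with hshort | hlong
  · refine ⟨s.image fun c j => f^[j] c, ?_, fun x hx => ?_⟩
    · calc ((s.image fun c j => f^[j] c).card : ℝ≥0∞) ≤ s.card := by
            exact_mod_cast Finset.card_image_le
        _ ≤ EReal.exp (r * m : ℝ) := hs_card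
        _ ≤ EReal.exp (r * (ℓ + M) : ℝ) := by
            gcongr
            norm_cast
            omega
    · obtain ⟨c, hc, hxc⟩ := hs (hzO hx)
      exact mem_iUnion₂.2 ⟨_, Finset.mem_image_of_mem _ hc,
        shadowSet_antitone hshort (mem_shadowSet_iterate_iff.2 hxc)⟩
  · obtain ⟨k, rfl⟩ := Nat.exists_eq_add_of_le hlong.le
    obtain ⟨t, ht_card, ht⟩ := ih k (by omega) (by omega) (g^[m] z)
    let append : X × (ℕ → X) → ℕ → X := fun p j =>
      if j < m then f^[j] p.1 else p.2 (j - m)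
    refine ⟨(s ×ˢ t).image append, ?_, fun x hx => ?_⟩
    · calc (((s ×ˢ t).image append).card : ℝ≥0∞) ≤ (s.card * t.card : ℕ) := by
            exact_mod_cast Finset.card_image_le.trans (Finset.card_product s t).le
        _ ≤ EReal.exp (r * m : ℝ) * EReal.exp (r * (k + M) : ℝ) := by
            push_cast
            exact mul_le_mul' hs_card ht_card
        _ = EReal.exp (r * ((m + k : ℕ) + M) : ℝ) := by
            rw [← EReal.exp_add, ← EReal.coe_add]
            congr 2
            push_cast
            ring
    · obtain ⟨c, hc, hxc⟩ := hs (hzO hx)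
      have hshift : f^[m] x ∈ π ⁻¹' ball (g^[m] z) (dynEntourage g O k) := by
        rw [mem_preimage, (hsemi.iterate_right m).eq]
        exact iterate_mem_ball_dynEntourage hx
      obtain ⟨ψ, hψ, hxψ⟩ := mem_iUnion₂.1 (ht hshift)
      refine mem_iUnion₂.2 ⟨_, Finset.mem_image_of_mem _ (Finset.mk_mem_product hc hψ), ?_⟩
      exact mem_shadowSet_append hxc hxψ

lemma coverMincard_le_mul_of_shadowSet_cover {f : X → X} {g : Y → Y} {π : X → Y}
    {U : SetRel X X} [U.IsSymm] {O : SetRel Y Y} [O.IsSymm] {n : ℕ} {B : ℝ≥0∞}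
    (hB : B ≠ 0)
    (h : ∀ z, ∃ t : Finset (ℕ → X), (t.card : ℝ≥0∞) ≤ B ∧
      π ⁻¹' ball z (dynEntourage g O n) ⊆ ⋃ φ ∈ t, shadowSet f U n φ) :
    (coverMincard f univ (U ○ U) n : ℝ≥0∞) ≤ coverMincard g univ O n * B := by
  classical
  rcases eq_top_or_lt_top (coverMincard g univ O n) with htop | hfin
  · simp [htop, ENNReal.top_mul hB]
  obtain ⟨tY, htY, htY_card⟩ := (coverMincard_finite_iff g univ O n).1 hfin
  choose t ht_card ht using h
  have hcover : univ ⊆ ⋃ φ ∈ tY.biUnion t, shadowSet f U n φ := by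
    intro x _
    obtain ⟨z, hz, hxz⟩ := htY (mem_univ (π x))
    obtain ⟨φ, hφ, hxφ⟩ := mem_iUnion₂.1 (ht z (SetRel.symm _ hxz))
    exact mem_iUnion₂.2 ⟨φ, Finset.mem_biUnion.2 ⟨z, hz, hφ⟩, hxφ⟩
  obtain ⟨s, hs, hs_card⟩ := exists_isDynCoverOf_card_le_of_subset_shadowSet hcover
  calc (coverMincard f univ (U ○ U) n : ℝ≥0∞) ≤ s.card := by
        exact_mod_cast hs.coverMincard_le_card
    _ ≤ ∑ z ∈ tY, ((t z).card : ℝ≥0∞) := by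
        exact_mod_cast hs_card.trans Finset.card_biUnion_le
    _ ≤ ∑ _z ∈ tY, B := Finset.sum_le_sum fun z _ => ht_card z
    _ = coverMincard g univ O n * B := by
        rw [Finset.sum_const, nsmul_eq_mul, ← htY_card]
        rfl

lemma exists_uniformity_forall_isDynCoverOf_preimage_ball [UniformSpace X] [CompactSpace X]
    [UniformSpace Y] [CompactSpace Y] [T2Space Y] {f : X → X} {π : X → Y} (hf : Continuous f)
    (hπ : Continuous π) {U : SetRel X X} (hU : IsOpen U) {r : ℝ}
    (hfib : ∀ y, coverEntropyEntourage f (π ⁻¹' {y}) U < r) :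
    ∃ O : SetRel Y Y, O ∈ 𝓤 Y ∧ O.IsSymm ∧ ∃ M : ℕ, ∀ z, ∃ m, 1 ≤ m ∧ m ≤ M ∧
      ∃ s : Finset X, IsDynCoverOf f (π ⁻¹' ball z O) U m s ∧
        (s.card : ℝ≥0∞) ≤ EReal.exp (r * m : ℝ) := by
  choose n hn1 s hs hs_card using fun y => exists_isDynCoverOf_card_le_exp (hfib y)
  set W : Y → Set X := fun y => ⋃ c ∈ s y, (·, c) ⁻¹' dynEntourage f U (n y)
  have hW_open y : IsOpen (W y) := isOpen_biUnion fun c _ =>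
    (isOpen.dynEntourage hf hU (n y)).preimage (.prodMk_left c)
  -- `kernImage π (W y)` is the set of points whose whole fibre lies in `W y`
  have hN_open y : IsOpen (kernImage π (W y)) :=
    isClosedMap_iff_kernImage.1 (hπ.isClosedMap) (hW_open y)
  have hN_mem y : y ∈ kernImage π (W y) := fun x hx => by
    obtain ⟨c, hc, hxc⟩ := hs y hx
    exact mem_iUnion₂.2 ⟨c, hc, hxc⟩
  obtain ⟨tF, htF⟩ := isCompact_univ.elim_finite_subcover (fun y => kernImage π (W y)) hN_open
    fun y _ => mem_iUnion.2 ⟨y, hN_mem y⟩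
  obtain ⟨O₀, hO₀, hO₀_sub⟩ := lebesgue_number_lemma isCompact_univ
    (U := fun y : tF => kernImage π (W y)) (fun y => hN_open y) fun z hz => by
      obtain ⟨y, hy, hzy⟩ := mem_iUnion₂.1 (htF hz)
      exact mem_iUnion.2 ⟨⟨y, hy⟩, hzy⟩
  obtain ⟨O, ⟨hO, hO_symm⟩, hOO₀⟩ := UniformSpace.hasBasis_symmetric.mem_iff.1 hO₀
  refine ⟨O, hO, hO_symm, tF.sup n, fun z => ?_⟩
  obtain ⟨⟨y, hy⟩, hzy⟩ := hO₀_sub z (mem_univ z)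
  refine ⟨n y, hn1 y, Finset.le_sup hy, s y, fun x hx => ?_, hs_card y⟩
  obtain ⟨c, hc, hxc⟩ :=
    mem_iUnion₂.1 (subset_kernImage_iff.1 ((ball_mono hOO₀ z).trans hzy) hx)
  exact ⟨c, hc, hxc⟩

theorem coverEntropy_le_add_of_forall_coverEntropy_fiber_le [UniformSpace X] [CompactSpace X]
    [UniformSpace Y] [CompactSpace Y] [T2Space Y] {f : X → X} {g : Y → Y} {π : X → Y}
    (hf : Continuous f) (hπ : Continuous π) (hsemi : Semiconj π f g) {c : ℝ} (hc : 0 ≤ c)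
    (hfib : ∀ y, coverEntropy f (π ⁻¹' {y}) ≤ c) :
    coverEntropy f univ ≤ coverEntropy g univ + c := by
  refine EReal.le_of_forall_pos_le_add fun ε hε => iSup₂_le fun V hV => ?_
  obtain ⟨W, hW, -, hWV⟩ := comp_symm_mem_uniformity_sets hV
  obtain ⟨U, ⟨hU, hU_open, hU_symm⟩, hUW⟩ := uniformity_hasBasis_open_symmetric.mem_iff.1 hW
  have hfibU y : coverEntropyEntourage f (π ⁻¹' {y}) U < (c + ε : ℝ) :=
    ((coverEntropyEntourage_le_coverEntropy f _ hU).trans (hfib y)).trans_lt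
      (EReal.coe_lt_coe_iff.2 (lt_add_of_pos_right c hε))
  obtain ⟨O, hO, hO_symm, M, hloc⟩ :=
    exists_uniformity_forall_isDynCoverOf_preimage_ball hf hπ hU_open hfibU
  have hcount : ∀ᶠ n in atTop, (coverMincard f univ (U ○ U) n : ℝ≥0∞) ≤
      coverMincard g univ O n * EReal.exp ((c + ε) * (n + M) : ℝ) := by
    filter_upwards [eventually_gt_atTop 0] with n hn
    exact coverMincard_le_mul_of_shadowSet_cover
      (EReal.exp_eq_zero_iff.not.2 (EReal.coe_ne_bot _)) fun z =>
        exists_shadowSet_cover_preimage_ball_dynEntourage hsemi (by positivity) hloc hn z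
  have hrate : Tendsto (fun n : ℕ => (c + ε) * (n + M) / n) atTop (𝓝 (c + ε)) := by
    simpa [mul_add, add_comm] using
      tendsto_add_mul_div_add_mul_atTop_nhds ((c + ε) * M) 0 (c + ε) one_ne_zero
  calc coverEntropyEntourage f univ V
      ≤ coverEntropyEntourage f univ (U ○ U) :=
        coverEntropyEntourage_antitone f univ ((SetRel.comp_subset_comp hUW hUW).trans hWV)
    _ ≤ coverEntropyEntourage g univ O + (c + ε : ℝ) :=
        limsup_log_div_le_add_of_le_mul_exp hcount hrate
    _ ≤ coverEntropy g univ + c + ε := by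
        rw [EReal.coe_add, ← add_assoc]
        gcongr
        exact coverEntropyEntourage_le_coverEntropy g univ hO

end Dynamics

theorem topEntropy_eq_of_zero_entropy_fibers_general
    {X Y : Type*} [MetricSpace X] [CompactSpace X] [MetricSpace Y] [CompactSpace Y]
    (f : X → X) (g : Y → Y) (π : X → Y)
    (hf : Continuous f) (hπ : Continuous π)
    (hsurj : Function.Surjective π) (hsemi : π ∘ f = g ∘ π)
    (hfib : ∀ y : Y, Dynamics.coverEntropy f (π ⁻¹' {y}) = 0) :
    Dynamics.coverEntropy f Set.univ = Dynamics.coverEntropy g Set.univ := by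
  have hsemi' : Semiconj π f g := congrFun hsemi
  refine le_antisymm ?_ ?_
  · simpa using coverEntropy_le_add_of_forall_coverEntropy_fiber_le hf hπ hsemi' le_rfl
      fun y => (hfib y).le
  · rw [← hsurj.range_eq, ← image_univ]
    exact coverEntropy_image_le_of_uniformContinuous hsemi'
      (CompactSpace.uniformContinuous_of_continuous hπ) univ

/-- If all fibers of a continuous surjective semiconjugacy `π` carry zero
topological (Bowen) entropy, then the topological entropies of `f` and `g` coincide. -/
theorem topEntropy_eq_of_zero_entropy_fibers
    {X Y : Type*} [MetricSpace X] [CompactSpace X] [MetricSpace Y] [CompactSpace Y]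
    (f : X → X) (g : Y → Y) (π : X → Y)
    (hf : Continuous f) (hg : Continuous g) (hπ : Continuous π)
    (hsurj : Function.Surjective π) (hsemi : π ∘ f = g ∘ π)
    (hfib : ∀ y : Y, Dynamics.coverEntropy f (π ⁻¹' {y}) = 0) :
    Dynamics.coverEntropy f Set.univ = Dynamics.coverEntropy g Set.univ :=
  topEntropy_eq_of_zero_entropy_fibers_general f g π hf hπ hsurj hsemi hfib
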